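/- arXiv:2109.05077 — 2 statements merged into one kernel-verified Lean document; each statement's English description precedes it below -/
import Mathlib

section
/- Combining the two bounds: with X, D, D_n, h, l, l_n, H, C as above (h, l, l_n ∈ H), the generalization error satisfies ε_D(h,l) ≤ ε_{D_n}(h,l_n) + C + min(ε_{D_n}(l,l_n), ε_D(l,l_n)). -/
open MeasureTheory

lemma tri {X : Type*} [MeasurableSpace X] (μ : Measure X) [IsProbabilityMeasure μ]
    (f g k : X → Bool) (hf : Measurable f) (hg : Measurable g) (hk : Measurable k) :
    (μ {x | f x ≠ g x}).toReal ≤ (μ {x | f x ≠ k x}).toReal + (μ {x | k x ≠ g x}).toReal := by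
  have hsub : {x | f x ≠ g x} ⊆ {x | f x ≠ k x} ∪ {x | k x ≠ g x} := by
    intro x hx
    by_cases hfk : f x = k x
    · right; simp only [Set.mem_setOf_eq]; intro hkg; exact hx (hfk.trans hkg)
    · left; exact hfk
  have h1 : μ {x | f x ≠ g x} ≤ μ {x | f x ≠ k x} + μ {x | k x ≠ g x} :=
    le_trans (measure_mono hsub) (measure_union_le _ _)
  have hfin : ∀ s : Set X, μ s ≠ ⊤ := fun s => measure_ne_top μ s
  have := ENNReal.toReal_mono (by simp [ENNReal.add_ne_top, hfin]) h1
  rwa [ENNReal.toReal_add (hfin _) (hfin _)] at this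

theorem generalization_bound {X : Type*} [MeasurableSpace X]
    (D D_n : Measure X) [IsProbabilityMeasure D] [IsProbabilityMeasure D_n]
    (H : Set (X → Bool)) (h l l_n : X → Bool)
    (hh : Measurable h) (hl : Measurable l) (hln : Measurable l_n)
    (hhH : h ∈ H) (hlH : l ∈ H) (hlnH : l_n ∈ H)
    (C : ℝ) (hC : 0 ≤ C)
    (hdiv : ∀ f g : X → Bool, f ∈ H → g ∈ H →
      |(D {x | f x ≠ g x}).toReal - (D_n {x | f x ≠ g x}).toReal| ≤ C) :
    (D {x | h x ≠ l x}).toReal ≤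
      (D_n {x | h x ≠ l_n x}).toReal + C +
        min (D_n {x | l x ≠ l_n x}).toReal (D {x | l x ≠ l_n x}).toReal := by
  rcases min_cases (D_n {x | l x ≠ l_n x}).toReal (D {x | l x ≠ l_n x}).toReal with ⟨heq,_⟩|⟨heq,_⟩ <;> rw [heq]
  · -- ε_D(h,l) ≤ ε_{D_n}(h,l) + C ≤ ε_{D_n}(h,l_n) + ε_{D_n}(l_n,l) + C
    have h1 := abs_le.mp (hdiv h l hhH hlH)
    have h2 := tri D_n h l l_n hh hl hln
    have h3 : (D_n {x | l_n x ≠ l x}).toReal = (D_n {x | l x ≠ l_n x}).toReal := by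
      congr 2; ext x; exact ne_comm
    linarith [h1.2, h2, h3]
  · -- ε_D(h,l) ≤ ε_D(h,l_n) + ε_D(l_n,l) ≤ ε_{D_n}(h,l_n) + C + ε_D(l,l_n)
    have h1 := abs_le.mp (hdiv h l_n hhH hlnH)
    have h2 := tri D h l l_n hh hl hln
    have h3 : (D {x | l_n x ≠ l x}).toReal = (D {x | l x ≠ l_n x}).toReal := by
      congr 2; ext x; exact ne_comm
    linarith [h1.2, h2, h3]
end

section
/- Generalization bound with mixture source: let D, D_ud, D_mnd be probability measures on X, α ∈ [0,1], D_tr = α·D_ud + (1−α)·D_mnd, and h, l, l_n : X → {0,1} measurable. Then ε_D(h,l) ≤ ε_{D_tr}(h,l_n) + ε_{D_tr}(l,l_n) + α·d_TV(D, D_ud) + (1−α)·d_TV(D, D_mnd). -/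
open MeasureTheory
open scoped NNReal ENNReal

noncomputable def tvDist {X : Type*} [MeasurableSpace X] (μ ν : Measure X) : ℝ :=
  ⨆ A : {A : Set X // MeasurableSet A}, |(μ A.1).toReal - (ν A.1).toReal|

lemma abs_sub_le_tvDist {X : Type*} [MeasurableSpace X] (μ ν : Measure X)
    [IsProbabilityMeasure μ] [IsProbabilityMeasure ν] {A : Set X} (hA : MeasurableSet A) :
    |(μ A).toReal - (ν A).toReal| ≤ tvDist μ ν := by
  have hbdd : BddAbove (Set.range fun A : {A : Set X // MeasurableSet A} =>
      |(μ A.1).toReal - (ν A.1).toReal|) := by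
    refine ⟨2, ?_⟩
    rintro r ⟨B, rfl⟩
    have h1 : (μ B.1).toReal ≤ 1 := by
      have := prob_le_one (μ := μ) (s := B.1)
      exact ENNReal.toReal_le_of_le_ofReal zero_le_one (by simpa using this)
    have h2 : (ν B.1).toReal ≤ 1 := by
      have := prob_le_one (μ := ν) (s := B.1)
      exact ENNReal.toReal_le_of_le_ofReal zero_le_one (by simpa using this)
    have := abs_sub_abs_le_abs_sub (μ B.1).toReal (ν B.1).toReal
    calc |(μ B.1).toReal - (ν B.1).toReal| ≤ |(μ B.1).toReal| + |(ν B.1).toReal| :=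
          abs_sub _ _
      _ ≤ 1 + 1 := by
          rw [abs_of_nonneg ENNReal.toReal_nonneg, abs_of_nonneg ENNReal.toReal_nonneg]
          exact add_le_add h1 h2
      _ = 2 := by norm_num
  exact le_ciSup hbdd ⟨A, hA⟩

theorem generalization_bound_mixture {X : Type*} [MeasurableSpace X]
    (D D_ud D_mnd : Measure X) [IsProbabilityMeasure D]
    [IsProbabilityMeasure D_ud] [IsProbabilityMeasure D_mnd]
    (α : ℝ≥0) (hα : α ≤ 1)
    (h l l_n : X → Bool) (hh : Measurable h) (hl : Measurable l) (hln : Measurable l_n) :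
    letI D_tr : Measure X := α • D_ud + (1 - α) • D_mnd
    (D {x | h x ≠ l x}).toReal ≤
      (D_tr {x | h x ≠ l_n x}).toReal + (D_tr {x | l x ≠ l_n x}).toReal +
        (α : ℝ) * tvDist D D_ud + ((1 - α : ℝ≥0) : ℝ) * tvDist D D_mnd := by
  set D_tr : Measure X := α • D_ud + (1 - α) • D_mnd with hDtr
  set A : Set X := {x | h x ≠ l x} with hAdef
  set B : Set X := {x | h x ≠ l_n x} with hBdef
  set C : Set X := {x | l x ≠ l_n x} with hCdef
  have hAm : MeasurableSet A := (measurableSet_eq_fun hh hl).compl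
  have hBm : MeasurableSet B := (measurableSet_eq_fun hh hln).compl
  have hCm : MeasurableSet C := (measurableSet_eq_fun hl hln).compl
  have hsub : A ⊆ B ∪ C := by
    intro x hx
    by_contra hc
    simp only [hAdef, hBdef, hCdef, Set.mem_union, Set.mem_setOf_eq, not_or, not_not] at hx hc
    exact hx (hc.1.trans hc.2.symm)
  -- D_tr is a finite measure
  haveI : IsFiniteMeasure D_tr := by
    rw [hDtr]
    infer_instance
  have hfin : ∀ S : Set X, D_tr S ≠ ⊤ := fun S => measure_ne_top _ _
  -- triangle inequality under D_tr
  have htri : (D_tr A).toReal ≤ (D_tr B).toReal + (D_tr C).toReal := by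
    rw [← ENNReal.toReal_add (hfin B) (hfin C)]
    refine ENNReal.toReal_mono (by simp [hfin B, hfin C]) ?_
    exact (measure_mono hsub).trans (measure_union_le B C)
  -- decomposition of D_tr A
  have hdecomp : ∀ S : Set X,
      (D_tr S).toReal = (α : ℝ) * (D_ud S).toReal + ((1 - α : ℝ≥0) : ℝ) * (D_mnd S).toReal := by
    intro S
    show ((α • D_ud + (1 - α) • D_mnd) S).toReal = _
    rw [Measure.add_apply, Measure.smul_apply, Measure.smul_apply, ENNReal.smul_def,
      ENNReal.smul_def, smul_eq_mul, smul_eq_mul,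
      ENNReal.toReal_add (ENNReal.mul_ne_top ENNReal.coe_ne_top (measure_ne_top _ _))
        (ENNReal.mul_ne_top ENNReal.coe_ne_top (measure_ne_top _ _)),
      ENNReal.toReal_mul, ENNReal.toReal_mul, ENNReal.coe_toReal, ENNReal.coe_toReal]
  have hcoe : ((1 - α : ℝ≥0) : ℝ) = 1 - (α : ℝ) := by
    rw [NNReal.coe_sub hα]; simp
  have habs1 : |(D A).toReal - (D_ud A).toReal| ≤ tvDist D D_ud :=
    abs_sub_le_tvDist D D_ud hAm
  have habs2 : |(D A).toReal - (D_mnd A).toReal| ≤ tvDist D D_mnd :=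
    abs_sub_le_tvDist D D_mnd hAm
  have key : (D A).toReal ≤ (D_tr A).toReal
      + (α : ℝ) * tvDist D D_ud + ((1 - α : ℝ≥0) : ℝ) * tvDist D D_mnd := by
    have hα0 : (0 : ℝ) ≤ (α : ℝ) := α.coe_nonneg
    have hα1 : (0 : ℝ) ≤ ((1 - α : ℝ≥0) : ℝ) := (1 - α).coe_nonneg
    have e1 : (α : ℝ) * ((D A).toReal - (D_ud A).toReal) ≤ (α : ℝ) * tvDist D D_ud :=
      mul_le_mul_of_nonneg_left ((le_abs_self _).trans habs1) hα0
    have e2 : ((1 - α : ℝ≥0) : ℝ) * ((D A).toReal - (D_mnd A).toReal)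
        ≤ ((1 - α : ℝ≥0) : ℝ) * tvDist D D_mnd :=
      mul_le_mul_of_nonneg_left ((le_abs_self _).trans habs2) hα1
    have hsum : (D A).toReal = (α : ℝ) * (D A).toReal + ((1 - α : ℝ≥0) : ℝ) * (D A).toReal := by
      rw [hcoe]; ring
    have := add_le_add e1 e2
    rw [hdecomp A]
    nlinarith [this]
  linarith [key, htri]
end
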